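/- In the setting of Lemma 1 (scalar form), the law of the terminal variable X_T equals gaussianReal (√(ᾱ_T) · x₀ + μ) ((1 − ᾱ_T) · σ²); in particular the mean of X_T is √(ᾱ_T)·x₀ + μ and its variance is (1 − ᾱ_T)·σ². -/

import Mathlib

/-!
Each step of the recursion is affine in the previous state and a fresh noise `ε (t + 1)`, which
is independent of `ε 0, …, ε t` and hence of `X t`; so a Gaussian law `N(m, v)` is carried to
`N(√α_{t+1} m + μ / η_T, α_{t+1} v + (1 - α_{t+1}) σ²)`. Starting from the point mass at `x₀`,
the variances telescope to `(1 - ᾱ_t) σ²`, and the means are `√ᾱ_t x₀ + μ S_t / η_T` with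
`S_t = ∑_{m=1}^{t} √(∏_{n=m+1}^{t} α n)`, which satisfies `S_{t+1} = √α_{t+1} S_t + 1`,
`S_0 = 0` and `S_T = η_T`.
-/

open MeasureTheory ProbabilityTheory Finset
open scoped NNReal

/-- `ᾱ t = ∏_{i=1}^{t} α i`. -/
noncomputable def alphaBar (α : ℕ → ℝ) (t : ℕ) : ℝ := ∏ i ∈ Finset.Icc 1 t, α i

/-- `η t = 1 + ∑_{m=1}^{t-1} √(∏_{n=m+1}^{t} α n)` (so `η 1 = 1`). -/
noncomputable def eta (α : ℕ → ℝ) (t : ℕ) : ℝ :=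
  1 + ∑ m ∈ Finset.Icc 1 (t - 1), Real.sqrt (∏ n ∈ Finset.Icc (m + 1) t, α n)

section Schedule

variable {α : ℕ → ℝ}

lemma alphaBar_zero : alphaBar α 0 = 1 := by simp [alphaBar]

lemma alphaBar_succ (t : ℕ) : alphaBar α (t + 1) = alphaBar α t * α (t + 1) :=
  prod_Icc_succ_top (by omega) _

lemma alphaBar_nonneg (hα : ∀ n, 0 ≤ α n) (t : ℕ) : 0 ≤ alphaBar α t :=
  prod_nonneg fun i _ => hα i

lemma alphaBar_le_one (hα : ∀ n, 0 ≤ α n ∧ α n ≤ 1) (t : ℕ) : alphaBar α t ≤ 1 :=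
  prod_le_one (fun i _ => (hα i).1) fun i _ => (hα i).2

lemma sqrt_alphaBar_succ (hα : ∀ n, 0 ≤ α n) (t : ℕ) :
    Real.sqrt (alphaBar α (t + 1)) = Real.sqrt (α (t + 1)) * Real.sqrt (alphaBar α t) := by
  rw [alphaBar_succ, Real.sqrt_mul (alphaBar_nonneg hα t), mul_comm]

lemma one_le_eta (t : ℕ) : 1 ≤ eta α t :=
  le_add_of_nonneg_right (sum_nonneg fun _ _ => Real.sqrt_nonneg _)

/-- Agrees with `eta` for `t ≥ 1` (its `m = t` term is the `1` of `eta`) but vanishes at `t = 0`,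
where `eta α 0 = 1`; so its recursion holds from `t = 0` on. -/
noncomputable def shiftWeight (α : ℕ → ℝ) (t : ℕ) : ℝ :=
  ∑ m ∈ Icc 1 t, Real.sqrt (∏ n ∈ Icc (m + 1) t, α n)

lemma shiftWeight_zero : shiftWeight α 0 = 0 := by simp [shiftWeight]

lemma shiftWeight_succ (hα : ∀ n, 0 ≤ α n) (t : ℕ) :
    shiftWeight α (t + 1) = Real.sqrt (α (t + 1)) * shiftWeight α t + 1 := by
  have hfactor : ∀ m ∈ Icc 1 t, Real.sqrt (∏ n ∈ Icc (m + 1) (t + 1), α n)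
      = Real.sqrt (α (t + 1)) * Real.sqrt (∏ n ∈ Icc (m + 1) t, α n) := fun m hm => by
    rw [prod_Icc_succ_top (by simp at hm; omega), mul_comm,
      Real.sqrt_mul (hα _)]
  rw [shiftWeight, shiftWeight, sum_Icc_succ_top (by omega), sum_congr rfl hfactor, mul_sum]
  simp

lemma eta_eq_shiftWeight {t : ℕ} (ht : 1 ≤ t) : eta α t = shiftWeight α t := by
  obtain ⟨s, rfl⟩ : ∃ s, t = s + 1 := ⟨t - 1, by omega⟩
  rw [eta, shiftWeight, sum_Icc_succ_top (by omega)]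
  simp [add_comm]

end Schedule

section LinearGaussianRecursion

variable {Ω : Type*} {mΩ : MeasurableSpace Ω} {P : Measure Ω}

section NoiseHistory

variable {β : Type*} [mβ : MeasurableSpace β] {ε : ℕ → Ω → β}

abbrev noiseHistory (ε : ℕ → Ω → β) (t : ℕ) : MeasurableSpace Ω :=
  ⨆ i ∈ Set.Iic t, mβ.comap (ε i)

lemma noiseHistory_mono {s t : ℕ} (hst : s ≤ t) : noiseHistory ε s ≤ noiseHistory ε t :=
  biSup_mono fun _ hi => le_trans hi hst

lemma measurable_noiseHistory (t : ℕ) : Measurable[noiseHistory ε t] (ε t) :=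
  (comap_measurable (ε t)).mono (le_biSup (fun i => mβ.comap (ε i)) (Set.mem_Iic.mpr le_rfl))
    le_rfl

lemma indepFun_succ_of_measurable_noiseHistory {γ : Type*} [MeasurableSpace γ]
    (hεmeas : ∀ t, Measurable (ε t)) (hεindep : iIndepFun ε P) {t : ℕ} {Y : Ω → γ}
    (hY : Measurable[noiseHistory ε t] Y) : IndepFun Y (ε (t + 1)) P := by
  have hindep := indep_iSup_of_disjoint (fun i => (hεmeas i).comap_le) hεindep.iIndep
    (S := Set.Iic t) (T := {t + 1}) (by simp)
  rw [_root_.iSup_singleton] at hindep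
  exact indep_of_indep_of_le_left hindep hY.comap_le

end NoiseHistory

variable {ε : ℕ → Ω → ℝ} {X : ℕ → Ω → ℝ} {a b c : ℕ → ℝ} {T : ℕ}

lemma measurable_noiseHistory_of_linear_recursion {x₀ : ℝ} (hX0 : X 0 = fun _ => x₀)
    (hXrec : ∀ t < T, X (t + 1) = fun ω => a t * X t ω + b t * ε (t + 1) ω + c t) :
    ∀ t ≤ T, Measurable[noiseHistory ε t] (X t) := by
  intro t ht
  induction t with
  | zero => rw [hX0]; exact measurable_const
  | succ t ih =>
    rw [hXrec t ht]
    exact ((((ih (by omega)).mono (noiseHistory_mono t.le_succ) le_rfl).const_mul _).add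
      ((measurable_noiseHistory _).const_mul _)).add_const _

theorem hasLaw_gaussianReal_of_linear_recursion [IsProbabilityMeasure P]
    (hεmeas : ∀ t, Measurable (ε t)) (hεindep : iIndepFun ε P)
    (hεlaw : ∀ t, P.map (ε t) = gaussianReal 0 1) {m : ℕ → ℝ} {v : ℕ → ℝ≥0}
    (hX0 : X 0 = fun _ => m 0) (hv0 : v 0 = 0)
    (hXrec : ∀ t < T, X (t + 1) = fun ω => a t * X t ω + b t * ε (t + 1) ω + c t)
    (hm : ∀ t, m (t + 1) = a t * m t + c t)
    (hv : ∀ t, (v (t + 1) : ℝ) = a t ^ 2 * v t + b t ^ 2) :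
    ∀ t ≤ T, HasLaw (X t) (gaussianReal (m t) (v t)) P := by
  intro t ht
  induction t with
  | zero =>
    rw [hX0, hv0, gaussianReal_zero_var]
    exact hasLaw_dirac_of_ae_eq (ae_of_all _ fun _ => rfl)
  | succ t ih =>
    have hXt := gaussianReal_const_mul (ih (by omega)) (a t)
    have hεt := gaussianReal_const_mul ⟨(hεmeas (t + 1)).aemeasurable, hεlaw (t + 1)⟩ (b t)
    have hindep : IndepFun (fun ω => a t * X t ω) (fun ω => b t * ε (t + 1) ω) P :=
      (indepFun_succ_of_measurable_noiseHistory hεmeas hεindep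
        (measurable_noiseHistory_of_linear_recursion hX0 hXrec t (by omega))).comp
        (measurable_const_mul _) (measurable_const_mul _)
    have hsum := hindep.hasLaw_add hXt hεt
    rw [gaussianReal_conv_gaussianReal] at hsum
    have hshift := gaussianReal_add_const hsum (c t)
    rw [hXrec t ht, hm]
    convert hshift using 2
    · rfl
    · simp
    · exact NNReal.coe_injective (by simp [hv])

end LinearGaussianRecursion

theorem modified_forward_terminal_general
    {Ω : Type*} [MeasurableSpace Ω] (P : Measure Ω) [IsProbabilityMeasure P]
    (T : ℕ) (hT : 1 ≤ T)
    (α : ℕ → ℝ) (hα : ∀ n, 0 < α n ∧ α n < 1)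
    (σ : ℝ) (μ x₀ : ℝ)
    (ε : ℕ → Ω → ℝ) (hεmeas : ∀ t, Measurable (ε t))
    (hεindep : iIndepFun ε P)
    (hεlaw : ∀ t, Measure.map (ε t) P = gaussianReal 0 1)
    (X : ℕ → Ω → ℝ)
    (hX0 : X 0 = fun _ => x₀)
    (hXrec : ∀ t, 1 ≤ t → t ≤ T → X t = fun ω =>
      Real.sqrt (α t) * X (t - 1) ω + Real.sqrt (1 - α t) * σ * ε t ω + μ / eta α T) :
    Measure.map (X T) P
        = gaussianReal (Real.sqrt (alphaBar α T) * x₀ + μ)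
            (((1 - alphaBar α T) * σ ^ 2).toNNReal)
      ∧ (∫ ω, X T ω ∂P) = Real.sqrt (alphaBar α T) * x₀ + μ
      ∧ variance (X T) P = (1 - alphaBar α T) * σ ^ 2 := by
  have hα' : ∀ n, 0 ≤ α n ∧ α n ≤ 1 := fun n => ⟨(hα n).1.le, (hα n).2.le⟩
  have hvar_nonneg (t : ℕ) : 0 ≤ (1 - alphaBar α t) * σ ^ 2 :=
    mul_nonneg (sub_nonneg.mpr (alphaBar_le_one hα' t)) (sq_nonneg σ)
  have hlaw := hasLaw_gaussianReal_of_linear_recursion hεmeas hεindep hεlaw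
    (X := X) (m := fun t => Real.sqrt (alphaBar α t) * x₀ + μ * shiftWeight α t / eta α T)
    (v := fun t => ((1 - alphaBar α t) * σ ^ 2).toNNReal)
    (by simp [hX0, alphaBar_zero, shiftWeight_zero]) (by simp [alphaBar_zero])
    (fun t ht => by simpa using hXrec (t + 1) (by omega) ht)
    (fun t => by
      rw [sqrt_alphaBar_succ (fun n => (hα' n).1), shiftWeight_succ (fun n => (hα' n).1)]
      ring)
    (fun t => by
      rw [Real.coe_toNNReal _ (hvar_nonneg _), Real.coe_toNNReal _ (hvar_nonneg _), alphaBar_succ,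
        mul_pow, Real.sq_sqrt (hα' _).1, Real.sq_sqrt (sub_nonneg.mpr (hα' _).2)]
      ring)
    T le_rfl
  have hmean : Real.sqrt (alphaBar α T) * x₀ + μ * shiftWeight α T / eta α T
      = Real.sqrt (alphaBar α T) * x₀ + μ := by
    rw [← eta_eq_shiftWeight hT, mul_div_assoc, div_self (by linarith [one_le_eta (α := α) T]),
      mul_one]
  rw [hmean] at hlaw
  refine ⟨hlaw.map_eq, hlaw.integral_eq.trans integral_id_gaussianReal, ?_⟩
  rw [hlaw.variance_eq, variance_id_gaussianReal, Real.coe_toNNReal _ (hvar_nonneg T)]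

/-- Terminal marginal of the modified forward process: the law of `X T` is
`N(√(ᾱ T) · x₀ + μ, (1 − ᾱ T) · σ²)`; in particular the mean of `X T` is
`√(ᾱ T) · x₀ + μ` and its variance is `(1 − ᾱ T) · σ²`. -/
theorem modified_forward_terminal
    {Ω : Type*} [MeasurableSpace Ω] (P : Measure Ω) [IsProbabilityMeasure P]
    (T : ℕ) (hT : 1 ≤ T)
    (α : ℕ → ℝ) (hα : ∀ n, 0 < α n ∧ α n < 1)
    (σ : ℝ) (hσ : 0 < σ) (μ x₀ : ℝ)
    (ε : ℕ → Ω → ℝ) (hεmeas : ∀ t, Measurable (ε t))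
    (hεindep : iIndepFun ε P)
    (hεlaw : ∀ t, Measure.map (ε t) P = gaussianReal 0 1)
    (X : ℕ → Ω → ℝ)
    (hX0 : X 0 = fun _ => x₀)
    (hXrec : ∀ t, 1 ≤ t → t ≤ T → X t = fun ω =>
      Real.sqrt (α t) * X (t - 1) ω + Real.sqrt (1 - α t) * σ * ε t ω + μ / eta α T) :
    Measure.map (X T) P
        = gaussianReal (Real.sqrt (alphaBar α T) * x₀ + μ)
            (((1 - alphaBar α T) * σ ^ 2).toNNReal)
      ∧ (∫ ω, X T ω ∂P) = Real.sqrt (alphaBar α T) * x₀ + μ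
      ∧ variance (X T) P = (1 - alphaBar α T) * σ ^ 2 :=
  modified_forward_terminal_general P T hT α hα σ μ x₀ ε hεmeas hεindep hεlaw X hX0 hXrec
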